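/- Let $d \ge 1$, $M \ge 8$, $t_1 \ge 2$, and let $\{t_j\}$ be a sequence of positive reals with $t_{j+1}/t_j \ge 1 + 1/M$ for all $j$. Then there exist real numbers $\alpha_1, \dots, \alpha_d$ such that $\max_{1 \le k \le d} \|\alpha_k t_j\| \ge \frac{1}{2^{11}(M \log M)^{1/d}}$ for all $j \in \mathbb{N}$. -/

import Mathlib

/-!
A Cantor-type construction in `[0, 1]^d`. A frequency `t ∈ [2^m, 2^(m+1))` is handled at dyadic
level `m + g`: there we discard every cell all of whose coordinate intervals contain a point `x`
with `‖x t‖ < ε`. For `ε ≤ 2^-(g+1)` one frequency discards at most `6^d` of the `2^(dg)` cells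
of level `m + g` below a cell of level `m`, and lacunarity allows at most `⌈M⌉` frequencies per
dyadic scale. Comparing with the `2^d` children of each cell, the number of surviving cells of
level `n` is at least `θ^n`, with `θ = 2^d (1 - 1/(2g))`, as soon as
`⌈M⌉ 6^d ≤ (2^d - θ) θ^(g-1)`. The nested compact unions of surviving cells then share a point
`α`, and by construction some `‖α_k t_j‖ ≥ ε` for every `j`. Choosing `2^g ≈ 2^10 (M log M)^(1/d)`
satisfies the gap condition with `ε = 2^-11 (M log M)^(-1/d)`.
-/

namespace PeresSchlag

def dyadicIcc (n i : ℕ) : Set ℝ := Set.Icc (i / 2 ^ n) ((i + 1) / 2 ^ n)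

lemma dyadicIcc_add_subset (m s i : ℕ) : dyadicIcc (m + s) i ⊆ dyadicIcc m (i / 2 ^ s) := by
  have hlo : ((i / 2 ^ s : ℕ) : ℝ) * 2 ^ s ≤ i := by exact_mod_cast Nat.div_mul_le_self i (2 ^ s)
  have hhi : (i : ℝ) + 1 ≤ ((i / 2 ^ s : ℕ) + 1) * 2 ^ s := by
    have := Nat.lt_div_mul_add (a := i) (Nat.two_pow_pos s)
    exact_mod_cast (by linarith : i + 1 ≤ (i / 2 ^ s + 1) * 2 ^ s)
  rintro x ⟨hx₁, hx₂⟩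
  rw [pow_add] at hx₁ hx₂
  constructor
  · calc ((i / 2 ^ s : ℕ) : ℝ) / 2 ^ m = (i / 2 ^ s : ℕ) * 2 ^ s / (2 ^ m * 2 ^ s) := by
          field_simp
      _ ≤ i / (2 ^ m * 2 ^ s) := by gcongr
      _ ≤ x := hx₁
  · calc x ≤ (i + 1) / (2 ^ m * 2 ^ s) := hx₂
      _ ≤ ((i / 2 ^ s : ℕ) + 1) * 2 ^ s / (2 ^ m * 2 ^ s) := by gcongr
      _ = ((i / 2 ^ s : ℕ) + 1) / 2 ^ m := by field_simp

def IsBadInterval (t ε : ℝ) (n i : ℕ) : Prop := ∃ x ∈ dyadicIcc n i, ∃ b : ℤ, |x * t - b| < ε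

lemma mem_Ioc_floor_of_lt {u : ℝ} {b : ℤ} {l : ℕ} (h₁ : u < b) (h₂ : b < u + l) :
    b ∈ Finset.Ioc ⌊u⌋ (⌊u⌋ + l) := by
  refine Finset.mem_Ioc.2 ⟨Int.floor_lt.2 h₁, ?_⟩
  have : (b : ℝ) < ⌊u⌋ + l + 1 := by linarith [Int.lt_floor_add_one u]
  exact_mod_cast Int.lt_add_one_iff.1 (by exact_mod_cast this)

lemma mem_Ioc_of_isBadInterval_witness {t ε x : ℝ} {m g i : ℕ} {b : ℤ}
    (ht : t ∈ Set.Ico (2 ^ m) (2 ^ (m + 1))) (hε : ε * 2 ^ (g + 1) ≤ 1)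
    (hx : x ∈ dyadicIcc (m + g) i) (hb : |x * t - b| < ε) :
    b ∈ Finset.Ioc ⌊(i / 2 ^ g : ℕ) * (t / 2 ^ m) - ε⌋
      (⌊(i / 2 ^ g : ℕ) * (t / 2 ^ m) - ε⌋ + (3 : ℕ)) ∧
    (i : ℤ) ∈ Finset.Ioc ⌊(b - ε) / (t / 2 ^ (m + g)) - 1⌋
      (⌊(b - ε) / (t / 2 ^ (m + g)) - 1⌋ + (2 : ℕ)) := by
  obtain ⟨ht₁, ht₂⟩ := ht
  have h2m : (0 : ℝ) < 2 ^ m := by positivity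
  have ht₀ : 0 < t := h2m.trans_le ht₁
  set τ := t / 2 ^ m
  have hτ₁ : 1 ≤ τ := (one_le_div h2m).2 ht₁
  have hτ₂ : τ < 2 := (div_lt_iff₀ h2m).2 (by rw [pow_succ] at ht₂; linarith)
  set σ := t / 2 ^ (m + g)
  have hσ : 0 < σ := by positivity
  have hστ : σ * 2 ^ g = τ := by simp only [σ, τ]; field_simp; ring
  rw [pow_succ] at hε
  have hεσ : 2 * ε / σ ≤ 1 := by
    rw [div_le_one hσ]
    nlinarith
  have hε₂ : 2 * ε ≤ 1 := by
    have : (1 : ℝ) ≤ 2 ^ g := one_le_pow₀ one_le_two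
    nlinarith
  obtain ⟨hy₁, hy₂⟩ := dyadicIcc_add_subset m g i hx
  obtain ⟨hz₁, hz₂⟩ := hx
  obtain ⟨hb₁, hb₂⟩ := abs_lt.1 hb
  rw [div_le_iff₀ h2m] at hy₁
  rw [le_div_iff₀ h2m] at hy₂
  rw [div_le_iff₀ (by positivity)] at hz₁
  rw [le_div_iff₀ (by positivity)] at hz₂
  have hxt : x * t = x * 2 ^ m * τ := by simp only [τ]; field_simp
  have hxt' : x * t = x * 2 ^ (m + g) * σ := by simp only [σ]; field_simp
  have hz₃ : (b - ε) / σ < x * 2 ^ (m + g) := (div_lt_iff₀ hσ).2 (by linarith)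
  have hz₄ : x * 2 ^ (m + g) < (b - ε) / σ + 2 * ε / σ := by
    rw [← add_div, lt_div_iff₀ hσ]; linarith
  refine ⟨mem_Ioc_floor_of_lt ?_ ?_, mem_Ioc_floor_of_lt ?_ ?_⟩
  · nlinarith
  · push_cast; nlinarith
  · push_cast; linarith
  · push_cast; linarith

/-- On a dyadic interval of level `m`, `x * t` sweeps at most three integers, and near each of
them `x` stays in a window of length at most `2^-(m+g)`, which meets at most two of the
subintervals of level `m + g`. -/
lemma card_le_six_of_isBadInterval {t ε : ℝ} {m g a : ℕ} (ht : t ∈ Set.Ico (2 ^ m) (2 ^ (m + 1)))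
    (hε : ε * 2 ^ (g + 1) ≤ 1) {S : Finset ℕ}
    (hS : ∀ i ∈ S, i / 2 ^ g = a ∧ IsBadInterval t ε (m + g) i) : S.card ≤ 6 := by
  set B := Finset.Ioc ⌊(a : ℝ) * (t / 2 ^ m) - ε⌋ (⌊(a : ℝ) * (t / 2 ^ m) - ε⌋ + (3 : ℕ))
  set I : ℤ → Finset ℤ := fun b =>
    Finset.Ioc ⌊(b - ε) / (t / 2 ^ (m + g)) - 1⌋ (⌊(b - ε) / (t / 2 ^ (m + g)) - 1⌋ + (2 : ℕ))
  have hmaps : ∀ i ∈ S, (i : ℤ) ∈ B.biUnion I := by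
    intro i hi
    obtain ⟨rfl, x, hx, b, hb⟩ := hS i hi
    obtain ⟨hbB, hiI⟩ := mem_Ioc_of_isBadInterval_witness ht hε hx hb
    exact Finset.mem_biUnion.2 ⟨b, hbB, hiI⟩
  calc S.card ≤ (B.biUnion I).card :=
        Finset.card_le_card_of_injOn (fun i : ℕ => (i : ℤ)) hmaps fun _ _ _ _ => Int.ofNat_inj.1
    _ ≤ B.card * 2 := Finset.card_biUnion_le_card_mul _ _ _ fun b _ => by simp [I]
    _ ≤ 6 := by simp [B]

lemma card_le_six_pow_mul_of_isBadInterval {d m g : ℕ} {t ε : ℝ}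
    (ht : t ∈ Set.Ico (2 ^ m) (2 ^ (m + 1))) (hε : ε * 2 ^ (g + 1) ≤ 1)
    {S A : Finset (Fin d → ℕ)}
    (hS : ∀ c ∈ S, (fun k => c k / 2 ^ g) ∈ A ∧ ∀ k, IsBadInterval t ε (m + g) (c k)) :
    S.card ≤ 6 ^ d * A.card := by
  classical
  refine Finset.card_le_mul_card_image_of_maps_to (fun c hc => (hS c hc).1) _ fun a _ => ?_
  set F := S.filter fun c => (fun k => c k / 2 ^ g) = a
  have hcoord : ∀ k, (F.image (· k)).card ≤ 6 := fun k =>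
    card_le_six_of_isBadInterval (a := a k) ht hε fun i hi => by
      obtain ⟨c, hc, rfl⟩ := Finset.mem_image.1 hi
      obtain ⟨hcS, rfl⟩ := Finset.mem_filter.1 hc
      exact ⟨rfl, (hS c hcS).2 k⟩
  calc F.card ≤ (Fintype.piFinset fun k => F.image (· k)).card :=
        Finset.card_le_card fun c hc =>
          Fintype.mem_piFinset.2 fun k => Finset.mem_image_of_mem _ hc
    _ = ∏ k, (F.image (· k)).card := Fintype.card_piFinset _
    _ ≤ ∏ _k : Fin d, 6 := Finset.prod_le_prod' fun k _ => hcoord k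
    _ = 6 ^ d := by simp

lemma pow_mul_le_of_forall_mul_le {a : ℕ → ℝ} {θ : ℝ} (hθ : 0 ≤ θ) {m k : ℕ}
    (h : ∀ i < k, θ * a (m + i) ≤ a (m + i + 1)) : θ ^ k * a m ≤ a (m + k) := by
  induction k with
  | zero => simp
  | succ k ih =>
    calc θ ^ (k + 1) * a m = θ * (θ ^ k * a m) := by ring
      _ ≤ θ * a (m + k) := by gcongr; exact ih fun i hi => h i (by omega)
      _ ≤ a (m + (k + 1)) := h k k.lt_succ_self

def DyadicallySparse {ι : Type*} (K : ℕ) (t : ι → ℝ) : Prop :=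
  ∀ m : ℕ, ∃ J : Finset ι, J.card ≤ K ∧ ∀ j, t j ∈ Set.Ico (2 ^ m) (2 ^ (m + 1)) → j ∈ J

section Construction

open scoped Classical

variable {d : ℕ} {ι : Type*}

def children (c : Fin d → ℕ) : Finset (Fin d → ℕ) :=
  Fintype.piFinset fun k => {2 * c k, 2 * c k + 1}

lemma div_two_eq_of_mem_children {c p : Fin d → ℕ} (h : c ∈ children p) :
    (fun k => c k / 2) = p := by
  funext k
  have := Fintype.mem_piFinset.1 h k
  simp only [Finset.mem_insert, Finset.mem_singleton] at this
  omega

lemma card_biUnion_children (s : Finset (Fin d → ℕ)) :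
    (s.biUnion children).card = 2 ^ d * s.card := by
  rw [Finset.card_biUnion fun p _ q _ hpq => Finset.disjoint_left.2 fun c hp hq =>
    hpq ((div_two_eq_of_mem_children hp).symm.trans (div_two_eq_of_mem_children hq))]
  simp [children, Fintype.card_piFinset, mul_comm]

/-- A frequency `t j ∈ [2^m, 2^(m+1))` is handled at level `m + g`, where dyadic intervals are
short compared with `1 / t j`. -/
def IsKilled (t : ι → ℝ) (ε : ℝ) (g n : ℕ) (c : Fin d → ℕ) : Prop :=
  ∃ j m, m + g = n ∧ t j ∈ Set.Ico (2 ^ m) (2 ^ (m + 1)) ∧ ∀ k, IsBadInterval (t j) ε n (c k)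

variable (d) in
/-- A cell of level `n` is `c : Fin d → ℕ`, standing for the cube `∏ k, dyadicIcc n (c k)`. -/
noncomputable def survivors (t : ι → ℝ) (ε : ℝ) (g : ℕ) : ℕ → Finset (Fin d → ℕ)
  | 0 => {0}
  | n + 1 => ((survivors t ε g n).biUnion children).filter fun c => ¬ IsKilled t ε g (n + 1) c

variable {t : ι → ℝ} {ε : ℝ} {g : ℕ}

lemma div_two_mem_survivors {n : ℕ} {c : Fin d → ℕ}
    (hc : c ∈ (survivors d t ε g n).biUnion children) :
    (fun k => c k / 2) ∈ survivors d t ε g n := by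
  obtain ⟨p, hp, hcp⟩ := Finset.mem_biUnion.1 hc
  rwa [div_two_eq_of_mem_children hcp]

lemma div_pow_mem_survivors {m : ℕ} (s : ℕ) {c : Fin d → ℕ} (hc : c ∈ survivors d t ε g (m + s)) :
    (fun k => c k / 2 ^ s) ∈ survivors d t ε g m := by
  induction s generalizing c with
  | zero => simpa using hc
  | succ s ih =>
    have := ih (div_two_mem_survivors (Finset.mem_filter.1 hc).1)
    simpa only [Nat.div_div_eq_div_mul, ← pow_succ'] using this

lemma card_filter_isKilled_le {K m n : ℕ} (hg : 1 ≤ g) (hn : n + 1 = m + g)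
    (hε : ε * 2 ^ (g + 1) ≤ 1)
    (hK : DyadicallySparse K t) :
    (((survivors d t ε g n).biUnion children).filter (IsKilled t ε g (n + 1))).card ≤
      K * (6 ^ d * (survivors d t ε g m).card) := by
  obtain ⟨J, hJK, hJ⟩ := hK m
  set C := (survivors d t ε g n).biUnion children
  set J' := J.filter fun j => t j ∈ Set.Ico (2 ^ m) (2 ^ (m + 1))
  have hcover : C.filter (IsKilled t ε g (n + 1)) ⊆
      J'.biUnion fun j => C.filter fun c => ∀ k, IsBadInterval (t j) ε (n + 1) (c k) := by
    intro c hc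
    obtain ⟨hcC, j, m', hm', hj, hbad⟩ := Finset.mem_filter.1 hc
    obtain rfl : m' = m := by omega
    exact Finset.mem_biUnion.2
      ⟨j, Finset.mem_filter.2 ⟨hJ j hj, hj⟩, Finset.mem_filter.2 ⟨hcC, hbad⟩⟩
  have hancestor : ∀ c ∈ C, (fun k => c k / 2 ^ g) ∈ survivors d t ε g m := by
    intro c hc
    have hparent := div_two_mem_survivors hc
    rw [show n = m + (g - 1) by omega] at hparent
    have := div_pow_mem_survivors (g - 1) hparent
    simpa only [Nat.div_div_eq_div_mul, ← pow_succ', Nat.sub_add_cancel hg] using this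
  calc _ ≤ _ := Finset.card_le_card hcover
    _ ≤ J'.card * (6 ^ d * (survivors d t ε g m).card) :=
        Finset.card_biUnion_le_card_mul _ _ _ fun j hj =>
          card_le_six_pow_mul_of_isBadInterval (Finset.mem_filter.1 hj).2 hε fun c hc => by
            obtain ⟨hcC, hbad⟩ := Finset.mem_filter.1 hc
            exact ⟨hancestor c hcC, hn ▸ hbad⟩
    _ ≤ K * (6 ^ d * (survivors d t ε g m).card) := by
        gcongr; exact (Finset.card_filter_le _ _).trans hJK

lemma mul_card_survivors_le {K : ℕ} {θ : ℝ} (hg : 1 ≤ g) (hε : ε * 2 ^ (g + 1) ≤ 1)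
    (hK : DyadicallySparse K t)
    (hθ : 0 ≤ θ) (hθd : θ ≤ 2 ^ d) (hgap : K * 6 ^ d ≤ (2 ^ d - θ) * θ ^ (g - 1)) (n : ℕ) :
    θ * (survivors d t ε g n).card ≤ (survivors d t ε g (n + 1)).card := by
  induction n using Nat.strong_induction_on with
  | _ n ih =>
  set C := (survivors d t ε g n).biUnion children
  have hsplit : ((survivors d t ε g (n + 1)).card : ℝ) +
      (C.filter (IsKilled t ε g (n + 1))).card = 2 ^ d * (survivors d t ε g n).card := by
    rw [add_comm]
    exact_mod_cast (Finset.card_filter_add_card_filter_not _).trans (card_biUnion_children _)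
  rcases lt_or_ge (n + 1) g with hlt | hge
  · have hnone : C.filter (IsKilled t ε g (n + 1)) = ∅ :=
      Finset.filter_eq_empty_iff.2 fun _ _ ⟨_, _, hm, _⟩ => by omega
    rw [hnone, Finset.card_empty, Nat.cast_zero, add_zero] at hsplit
    rw [hsplit]
    gcongr
  · obtain ⟨m, hm⟩ : ∃ m, n + 1 = m + g := ⟨n + 1 - g, by omega⟩
    have hchain : θ ^ (g - 1) * (survivors d t ε g m).card ≤ (survivors d t ε g n).card := by
      have := pow_mul_le_of_forall_mul_le (a := fun i => ((survivors d t ε g i).card : ℝ)) hθ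
        (m := m) (k := g - 1) fun i hi => ih (m + i) (by omega)
      rwa [show m + (g - 1) = n by omega] at this
    have hkilled : ((C.filter (IsKilled t ε g (n + 1))).card : ℝ) ≤
        K * (6 ^ d * (survivors d t ε g m).card) := by
      exact_mod_cast card_filter_isKilled_le hg hm hε hK
    have : (K : ℝ) * (6 ^ d * (survivors d t ε g m).card) ≤
        (2 ^ d - θ) * (survivors d t ε g n).card := by
      calc _ = (K * 6 ^ d : ℝ) * (survivors d t ε g m).card := by ring
        _ ≤ (2 ^ d - θ) * θ ^ (g - 1) * (survivors d t ε g m).card := by gcongr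
        _ = (2 ^ d - θ) * (θ ^ (g - 1) * (survivors d t ε g m).card) := by ring
        _ ≤ _ := by gcongr
    linarith

lemma survivors_nonempty {K : ℕ} {θ : ℝ} (hg : 1 ≤ g) (hε : ε * 2 ^ (g + 1) ≤ 1)
    (hK : DyadicallySparse K t)
    (hθ : 0 < θ) (hθd : θ ≤ 2 ^ d) (hgap : K * 6 ^ d ≤ (2 ^ d - θ) * θ ^ (g - 1)) (n : ℕ) :
    (survivors d t ε g n).Nonempty := by
  have := pow_mul_le_of_forall_mul_le (a := fun i => ((survivors d t ε g i).card : ℝ)) hθ.le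
    (m := 0) (k := n) fun i _ => mul_card_survivors_le hg hε hK hθ.le hθd hgap _
  simp only [survivors, Finset.card_singleton, Nat.cast_one, mul_one, zero_add] at this
  exact Finset.card_pos.1 (by exact_mod_cast (pow_pos hθ n).trans_le this)

variable (d t ε g) in
def survivorSet (n : ℕ) : Set (Fin d → ℝ) :=
  ⋃ c ∈ survivors d t ε g n, Set.univ.pi fun k => dyadicIcc n (c k)

lemma isCompact_survivorSet (n : ℕ) : IsCompact (survivorSet d t ε g n) :=
  (survivors d t ε g n).finite_toSet.isCompact_biUnion fun _ _ =>
    isCompact_univ_pi fun _ => isCompact_Icc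

lemma isClosed_survivorSet (n : ℕ) : IsClosed (survivorSet d t ε g n) :=
  (isCompact_survivorSet n).isClosed

lemma survivorSet_succ_subset (n : ℕ) : survivorSet d t ε g (n + 1) ⊆ survivorSet d t ε g n := by
  simp only [survivorSet, Set.iUnion_subset_iff]
  intro c hc x hx
  refine Set.mem_biUnion (div_two_mem_survivors (Finset.mem_filter.1 hc).1) fun k _ => ?_
  simpa using dyadicIcc_add_subset n 1 (c k) (hx k trivial)

lemma survivorSet_nonempty {n : ℕ} (h : (survivors d t ε g n).Nonempty) :
    (survivorSet d t ε g n).Nonempty := by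
  obtain ⟨c, hc⟩ := h
  refine ⟨fun k => c k / 2 ^ n, Set.mem_biUnion hc fun k _ => ⟨le_rfl, ?_⟩⟩
  gcongr
  linarith

theorem exists_forall_exists_le_abs_mul_sub {K : ℕ} {θ : ℝ} (ht : ∀ j, 1 ≤ t j)
    (hK : DyadicallySparse K t)
    (hg : 1 ≤ g) (hε : ε * 2 ^ (g + 1) ≤ 1)
    (hθ : 0 < θ) (hθd : θ ≤ 2 ^ d) (hgap : K * 6 ^ d ≤ (2 ^ d - θ) * θ ^ (g - 1)) :
    ∃ α : Fin d → ℝ, ∀ j, ∃ k, ∀ a : ℤ, ε ≤ |α k * t j - a| := by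
  obtain ⟨α, hα⟩ := IsCompact.nonempty_iInter_of_sequence_nonempty_isCompact_isClosed _
    survivorSet_succ_subset
    (fun n => survivorSet_nonempty (survivors_nonempty hg hε hK hθ hθd hgap n))
    (isCompact_survivorSet 0) isClosed_survivorSet
  refine ⟨α, fun j => ?_⟩
  obtain ⟨m, hm₁, hm₂⟩ := exists_nat_pow_near (ht j) one_lt_two
  obtain ⟨n, hn⟩ : ∃ n, m + g = n + 1 := ⟨m + g - 1, by omega⟩
  obtain ⟨c, hc, hαc⟩ := Set.mem_iUnion₂.1 (Set.mem_iInter.1 hα (n + 1))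
  obtain ⟨k, hk⟩ : ∃ k, ¬ IsBadInterval (t j) ε (n + 1) (c k) := by
    by_contra! h
    exact (Finset.mem_filter.1 hc).2 ⟨j, m, hn, ⟨hm₁, hm₂⟩, h⟩
  exact ⟨k, fun a => not_lt.1 fun h => hk ⟨α k, hαc k trivial, a, h⟩⟩

end Construction
section Lacunary

variable {M : ℝ} {s : ℕ → ℝ}

lemma monotone_of_lacunary (hM : 0 < M) (hpos : ∀ j, 0 < s j)
    (hs : ∀ j, (1 + 1 / M) * s j ≤ s (j + 1)) : Monotone s :=
  monotone_nat_of_le_succ fun j => by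
    have : 0 < 1 / M * s j := mul_pos (one_div_pos.2 hM) (hpos j)
    linarith [hs j]

lemma dyadicallySparse_of_lacunary (hM : 0 < M) (hs : ∀ j, (1 + 1 / M) * s j ≤ s (j + 1)) :
    DyadicallySparse ⌈M⌉₊ s := by
  classical
  intro m
  by_cases hex : ∃ j, s j ∈ Set.Ico (2 ^ m) (2 ^ (m + 1))
  swap
  · exact ⟨∅, by simp, fun j hj => (hex ⟨j, hj⟩).elim⟩
  refine ⟨Finset.Ico (Nat.find hex) (Nat.find hex + ⌈M⌉₊), by simp, fun j hj => ?_⟩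
  obtain ⟨hj₀₁, -⟩ := Nat.find_spec hex
  obtain ⟨k, rfl⟩ := Nat.exists_eq_add_of_le (Nat.find_min' hex hj)
  have hgrow : (1 + 1 / M) ^ k * s (Nat.find hex) ≤ s (Nat.find hex + k) :=
    pow_mul_le_of_forall_mul_le (by positivity) fun i _ => hs _
  have hpow : (1 + 1 / M) ^ k < 2 := by
    by_contra! h
    nlinarith [hj.2, pow_succ' (2 : ℝ) m, pow_pos (two_pos : (0 : ℝ) < 2) m]
  have hbern := one_add_mul_le_pow (a := 1 / M) (by linarith [one_div_pos.2 hM]) k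
  have hk : (k : ℝ) < ⌈M⌉₊ := by
    have : (k : ℝ) * (1 / M) < 1 := by linarith
    rw [mul_one_div, div_lt_one hM] at this
    exact this.trans_le (Nat.le_ceil M)
  simp only [Finset.mem_Ico]
  exact ⟨by omega, by exact_mod_cast (Nat.add_lt_add_left (by exact_mod_cast hk) _)⟩

end Lacunary


lemma two_le_log_of_eight_le {M : ℝ} (hM : 8 ≤ M) : 2 ≤ Real.log M := by
  have h8 : Real.log 8 = 3 * Real.log 2 := by
    rw [show (8 : ℝ) = 2 ^ 3 by norm_num, Real.log_pow, Nat.cast_ofNat]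
  linarith [Real.log_le_log (by norm_num) hM, Real.log_two_gt_d9]

lemma pow_div_le_sub_mul_pow {q : ℝ} (hq : 0 ≤ q) {g : ℕ} (hg : 1 ≤ g) :
    q ^ g / (4 * g) ≤ (q - q * (1 - 1 / (2 * g))) * (q * (1 - 1 / (2 * g))) ^ (g - 1) := by
  have hg₁ : (1 : ℝ) ≤ g := by exact_mod_cast hg
  have hbern : (1 : ℝ) / 2 ≤ (1 - 1 / (2 * g)) ^ (g - 1) := by
    have hcast : ((g - 1 : ℕ) : ℝ) ≤ g := by exact_mod_cast Nat.sub_le g 1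
    have := one_add_mul_le_pow (a := -(1 / (2 * (g : ℝ)))) (by
      have : 1 / (2 * (g : ℝ)) ≤ 1 := by rw [div_le_one (by positivity)]; linarith
      linarith) (g - 1)
    have hfrac : ((g - 1 : ℕ) : ℝ) * (1 / (2 * g)) ≤ 1 / 2 := by
      rw [mul_one_div, div_le_div_iff₀ (by positivity) two_pos]; linarith
    rw [← sub_eq_add_neg] at this
    linarith
  have hsplit : q ^ g = q * q ^ (g - 1) := by rw [← pow_succ', Nat.sub_add_cancel hg]
  calc q ^ g / (4 * g) = q / (2 * g) * q ^ (g - 1) * (1 / 2) := by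
        rw [hsplit]; field_simp; ring
    _ ≤ q / (2 * g) * q ^ (g - 1) * (1 - 1 / (2 * g)) ^ (g - 1) := by gcongr
    _ = _ := by rw [mul_pow]; field_simp; ring

lemma le_eight_mul_log_of_two_pow_le {M : ℝ} (hM : 8 ≤ M) {g : ℕ}
    (hg : (2 : ℝ) ^ g ≤ 2 ^ 10 * M ^ 2) : (g : ℝ) ≤ 8 * Real.log M := by
  have hlog := Real.log_le_log (by positivity) hg
  rw [Real.log_mul (by positivity) (by positivity), Real.log_pow,
    Real.log_pow, Real.log_pow] at hlog
  push_cast at hlog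
  nlinarith [two_le_log_of_eight_le hM, Real.log_two_gt_d9]

lemma exists_gap_parameters {d : ℕ} (hd : 1 ≤ d) {M : ℝ} (hM : 8 ≤ M) :
    ∃ g : ℕ, ∃ θ : ℝ, 1 ≤ g ∧
      1 / (2 ^ 11 * (M * Real.log M) ^ ((1 : ℝ) / d)) * 2 ^ (g + 1) ≤ 1 ∧
      0 < θ ∧ θ ≤ 2 ^ d ∧ (M + 1) * 6 ^ d ≤ (2 ^ d - θ) * θ ^ (g - 1) := by
  set L := Real.log M
  have hL : 2 ≤ L := two_le_log_of_eight_le hM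
  have hLM : L ≤ M := (Real.log_le_sub_one_of_pos (by linarith)).trans (by linarith)
  have hML : 1 ≤ M * L := by nlinarith
  have hd₀ : (0 : ℝ) < d := by exact_mod_cast hd
  set X := (M * L) ^ ((1 : ℝ) / d)
  have hX : 1 ≤ X := Real.one_le_rpow hML (by positivity)
  have hXd : X ^ d = M * L := by
    rw [← Real.rpow_natCast, ← Real.rpow_mul (by positivity), one_div_mul_cancel hd₀.ne',
      Real.rpow_one]
  have hXML : X ≤ M * L :=
    calc X ≤ (M * L) ^ (1 : ℝ) := Real.rpow_le_rpow_of_exponent_le hML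
          ((div_le_one hd₀).2 (by exact_mod_cast hd))
      _ = M * L := Real.rpow_one _
  obtain ⟨n, hn₁, hn₂⟩ := exists_nat_pow_near (show 1 ≤ 2 ^ 9 * X by nlinarith) one_lt_two
  set g := n + 1
  have hg₁ : (1 : ℝ) ≤ g := by exact_mod_cast (show 1 ≤ g by omega)
  have hgL : (g : ℝ) ≤ 8 * L := le_eight_mul_log_of_two_pow_le hM <|
    calc (2 : ℝ) ^ g = 2 * 2 ^ n := pow_succ' 2 n
      _ ≤ 2 ^ 10 * X := by linarith
      _ ≤ 2 ^ 10 * M ^ 2 := by nlinarith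
  have h512 : (36 : ℝ) * 6 ^ d ≤ 512 ^ d := by
    obtain ⟨e, rfl⟩ := Nat.exists_eq_add_of_le' hd
    have : (6 : ℝ) ^ e ≤ 512 ^ e := pow_le_pow_left₀ (by norm_num) (by norm_num) e
    rw [pow_succ, pow_succ]
    nlinarith [pow_pos (show (0 : ℝ) < 6 by norm_num) e]
  have hβ : 1 / (2 * (g : ℝ)) < 1 := by rw [div_lt_one (by positivity)]; linarith
  refine ⟨g, 2 ^ d * (1 - 1 / (2 * g)), by omega, ?_,
    mul_pos (by positivity) (sub_pos.2 hβ), ?_, ?_⟩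
  · rw [div_mul_eq_mul_div, div_le_one (by positivity), one_mul, pow_succ, pow_succ]
    linarith
  · have : 0 ≤ 1 / (2 * (g : ℝ)) := by positivity
    exact mul_le_of_le_one_right (by positivity) (by linarith)
  · refine le_trans ?_ (pow_div_le_sub_mul_pow (by positivity) (by omega))
    rw [le_div_iff₀ (by positivity), ← pow_mul, mul_comm d, pow_mul]
    calc (M + 1) * 6 ^ d * (4 * g) ≤ (9 / 8 * M) * 6 ^ d * (4 * (8 * L)) := by gcongr; linarith
      _ = 36 * 6 ^ d * (M * L) := by ring
      _ ≤ 512 ^ d * (M * L) := by gcongr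
      _ = (2 ^ 9 * X) ^ d := by rw [mul_pow, hXd]; norm_num
      _ ≤ (2 ^ g) ^ d := by gcongr

end PeresSchlag

open PeresSchlag in
/-- Theorem 1 (multidimensional Peres–Schlag): there are reals `α 1, …, α d`
with `max_k ‖α k * t j‖ ≥ 1 / (2^11 (M log M)^(1/d))` for all `j ≥ 1`. -/
theorem peres_schlag_multidim (d : ℕ) (hd : 1 ≤ d) (M : ℝ) (hM : 8 ≤ M)
    (t : ℕ → ℝ) (hpos : ∀ j, 1 ≤ j → 0 < t j) (ht1 : 2 ≤ t 1)
    (hlac : ∀ j, 1 ≤ j → 1 + 1 / M ≤ t (j + 1) / t j) :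
    ∃ α : Fin d → ℝ, ∀ j, 1 ≤ j → ∃ k : Fin d, ∀ a : ℤ,
      1 / (2 ^ 11 * (M * Real.log M) ^ ((1 : ℝ) / d)) ≤ |α k * t j - (a : ℝ)| := by
  have hM₀ : 0 < M := by linarith
  set s : ℕ → ℝ := fun j => t (j + 1)
  have hs : ∀ j, (1 + 1 / M) * s j ≤ s (j + 1) := fun j =>
    (le_div_iff₀ (hpos (j + 1) (by omega))).1 (hlac (j + 1) (by omega))
  have hs₁ : ∀ j, 1 ≤ s j := fun j =>
    le_trans (by linarith) (monotone_of_lacunary hM₀ (fun j => hpos (j + 1) (by omega)) hs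
      (Nat.zero_le j))
  obtain ⟨g, θ, hg, hε, hθ, hθd, hgap⟩ := exists_gap_parameters hd hM
  have hgap' : (⌈M⌉₊ : ℝ) * 6 ^ d ≤ (2 ^ d - θ) * θ ^ (g - 1) :=
    le_trans (by gcongr; exact (Nat.ceil_lt_add_one hM₀.le).le) hgap
  obtain ⟨α, hα⟩ := exists_forall_exists_le_abs_mul_sub hs₁ (dyadicallySparse_of_lacunary hM₀ hs)
    hg hε hθ hθd hgap'
  refine ⟨α, fun j hj => ?_⟩
  obtain ⟨i, rfl⟩ := Nat.exists_eq_add_of_le' hj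
  exact hα i
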